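/- Let k ≥ 2, work in ℚ^k (or ℝ^k) with standard basis e₁, …, e_k, set e = e₁ + ⋯ + e_k, let σ = {x | x_i ≥ 0 for all i} be the nonnegative orthant, and define A = convexHull{(1/2)e + (1/2)e_j : 1 ≤ j ≤ k} + σ and B = convexHull{−(1/2)e + (1/2)e_j : 1 ≤ j ≤ k} + σ (Minkowski sums). Then A + A + B + B = convexHull{2e₁, …, 2e_k} + σ, and this set is a proper subset of σ. -/
import Mathlib


open Pointwise

/-- In `ℝ^k` (`k ≥ 2`) with standard basis `e₁, …, e_k`, set `e = e₁ + ⋯ + e_k`, let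
`σ` be the nonnegative orthant, and let
`A = conv{(1/2)e + (1/2)e_j} + σ` and `B = conv{−(1/2)e + (1/2)e_j} + σ`.
Then `A + A + B + B = conv{2e₁, …, 2e_k} + σ`, and this set is a proper subset of `σ`. -/
theorem stmt12 (k : ℕ) (hk : 2 ≤ k)
    (σ : Set (Fin k → ℝ)) (hσ : σ = {x : Fin k → ℝ | ∀ i, 0 ≤ x i})
    (A B : Set (Fin k → ℝ))
    (hA : A = convexHull ℝ (Set.range fun j : Fin k =>
        (1 / 2 : ℝ) • (1 : Fin k → ℝ) + (1 / 2 : ℝ) • (Pi.single j 1 : Fin k → ℝ)) + σ)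
    (hB : B = convexHull ℝ (Set.range fun j : Fin k =>
        -((1 / 2 : ℝ) • (1 : Fin k → ℝ)) + (1 / 2 : ℝ) • (Pi.single j 1 : Fin k → ℝ)) + σ) :
    A + A + B + B =
      convexHull ℝ (Set.range fun j : Fin k => (2 : ℝ) • (Pi.single j 1 : Fin k → ℝ)) + σ ∧
    A + A + B + B ⊂ σ := by
  set RA : Set (Fin k → ℝ) := Set.range fun j : Fin k =>
      (1 / 2 : ℝ) • (1 : Fin k → ℝ) + (1 / 2 : ℝ) • (Pi.single j 1 : Fin k → ℝ) with hRA
  set RB : Set (Fin k → ℝ) := Set.range fun j : Fin k =>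
      -((1 / 2 : ℝ) • (1 : Fin k → ℝ)) + (1 / 2 : ℝ) • (Pi.single j 1 : Fin k → ℝ) with hRB
  set R2 : Set (Fin k → ℝ) := Set.range fun j : Fin k =>
      (2 : ℝ) • (Pi.single j 1 : Fin k → ℝ) with hR2
  -- σ + σ = σ
  have hσσ : σ + σ = σ := by
    ext x
    simp only [Set.mem_add, hσ, Set.mem_setOf_eq]
    constructor
    · rintro ⟨a, ha, b, hb, rfl⟩ i
      exact add_nonneg (ha i) (hb i)
    · intro hx
      exact ⟨x, hx, 0, fun i => le_refl 0, by simp⟩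
  have hσconv : Convex ℝ σ := by
    rw [hσ]
    intro x hx y hy a b ha hb hab i
    simpa using add_nonneg (mul_nonneg ha (hx i)) (mul_nonneg hb (hy i))
  -- the key convex hull computation
  have key : convexHull ℝ (RA + RA + RB + RB) = convexHull ℝ R2 := by
    apply Set.Subset.antisymm
    · apply convexHull_min _ (convex_convexHull ℝ R2)
      rintro x hx
      simp only [Set.mem_add, hRA, hRB, Set.mem_range] at hx
      obtain ⟨p, ⟨q, ⟨a, ⟨j1, rfl⟩, b, ⟨j2, rfl⟩, rfl⟩, c, ⟨j3, rfl⟩, rfl⟩, d, ⟨j4, rfl⟩, rfl⟩ := hx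
      have h1 : (2:ℝ) • (Pi.single j1 1 : Fin k → ℝ) ∈ convexHull ℝ R2 :=
        subset_convexHull ℝ R2 ⟨j1, rfl⟩
      have h2 : (2:ℝ) • (Pi.single j2 1 : Fin k → ℝ) ∈ convexHull ℝ R2 :=
        subset_convexHull ℝ R2 ⟨j2, rfl⟩
      have h3 : (2:ℝ) • (Pi.single j3 1 : Fin k → ℝ) ∈ convexHull ℝ R2 :=
        subset_convexHull ℝ R2 ⟨j3, rfl⟩
      have h4 : (2:ℝ) • (Pi.single j4 1 : Fin k → ℝ) ∈ convexHull ℝ R2 :=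
        subset_convexHull ℝ R2 ⟨j4, rfl⟩
      have hm1 := (convex_convexHull ℝ R2) h1 h2 (by norm_num : (0:ℝ) ≤ 1/2)
        (by norm_num : (0:ℝ) ≤ 1/2) (by norm_num)
      have hm2 := (convex_convexHull ℝ R2) h3 h4 (by norm_num : (0:ℝ) ≤ 1/2)
        (by norm_num : (0:ℝ) ≤ 1/2) (by norm_num)
      have hm := (convex_convexHull ℝ R2) hm1 hm2 (by norm_num : (0:ℝ) ≤ 1/2)
        (by norm_num : (0:ℝ) ≤ 1/2) (by norm_num)
      convert hm using 1
      funext i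
      simp only [Pi.add_apply, Pi.smul_apply, Pi.one_apply, Pi.neg_apply, smul_eq_mul]
      ring
    · apply convexHull_min _ (convex_convexHull ℝ _)
      rintro x ⟨j, rfl⟩
      apply subset_convexHull ℝ _
      have hmem : ((1 / 2 : ℝ) • (1 : Fin k → ℝ) + (1 / 2 : ℝ) • (Pi.single j 1 : Fin k → ℝ))
          + ((1 / 2 : ℝ) • (1 : Fin k → ℝ) + (1 / 2 : ℝ) • (Pi.single j 1 : Fin k → ℝ))
          + (-((1 / 2 : ℝ) • (1 : Fin k → ℝ)) + (1 / 2 : ℝ) • (Pi.single j 1 : Fin k → ℝ))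
          + (-((1 / 2 : ℝ) • (1 : Fin k → ℝ)) + (1 / 2 : ℝ) • (Pi.single j 1 : Fin k → ℝ))
          ∈ RA + RA + RB + RB :=
        Set.add_mem_add (Set.add_mem_add (Set.add_mem_add ⟨j, rfl⟩ ⟨j, rfl⟩) ⟨j, rfl⟩) ⟨j, rfl⟩
      convert hmem using 1
      funext i
      simp only [Pi.add_apply, Pi.smul_apply, Pi.one_apply, Pi.neg_apply, smul_eq_mul]
      ring
  -- rearrange the set sum
  have hmain : A + A + B + B = convexHull ℝ R2 + σ := by
    rw [hA, hB]
    calc (convexHull ℝ RA + σ) + (convexHull ℝ RA + σ) + (convexHull ℝ RB + σ)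
          + (convexHull ℝ RB + σ)
        = (convexHull ℝ RA + convexHull ℝ RA + convexHull ℝ RB + convexHull ℝ RB)
            + (σ + σ + σ + σ) := by
          rw [add_add_add_comm (convexHull ℝ RA) σ, add_add_add_comm _ (σ + σ),
            add_add_add_comm _ (σ + σ + σ)]
      _ = convexHull ℝ (RA + RA + RB + RB) + σ := by
          rw [hσσ, hσσ, hσσ, convexHull_add, convexHull_add, convexHull_add]
      _ = convexHull ℝ R2 + σ := by rw [key]
  refine ⟨hmain, ?_⟩
  rw [hmain]
  constructor
  · -- conv R2 + σ ⊆ σ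
    have hsub : convexHull ℝ R2 ⊆ σ := by
      apply convexHull_min _ hσconv
      rintro x ⟨j, rfl⟩
      rw [hσ]
      intro i
      simp only [Pi.smul_apply, smul_eq_mul]
      rcases Pi.single_apply j (1:ℝ) i with _
      by_cases hij : i = j <;> simp [Pi.single_apply, hij]
    rintro x hx
    obtain ⟨c, hc, s, hs, rfl⟩ := Set.mem_add.1 hx
    rw [hσ] at hs ⊢
    intro i
    exact add_nonneg ((hσ ▸ hsub hc) i) (hs i)
  · -- not σ ⊆ conv R2 + σ : 0 is a witness
    intro hcon
    have h0 : (0 : Fin k → ℝ) ∈ σ := by rw [hσ]; intro i; exact le_refl 0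
    have h0' := hcon h0
    obtain ⟨c, hc, s, hs, hcs⟩ := Set.mem_add.1 h0'
    -- sum of coordinates of c is 2
    have hsum : c ∈ {x : Fin k → ℝ | (2:ℝ) ≤ ∑ i, x i} := by
      refine convexHull_min ?_ ?_ hc
      · rintro x ⟨j, rfl⟩
        simp only [Set.mem_setOf_eq, Pi.smul_apply, smul_eq_mul, ← Finset.mul_sum]
        rw [Finset.sum_eq_single j]
        · simp
        · intro b _ hbj; exact Pi.single_eq_of_ne hbj 1
        · intro hj; exact absurd (Finset.mem_univ j) hj
      · intro x hx y hy a b ha hb hab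
        simp only [Set.mem_setOf_eq] at hx hy ⊢
        have : ∑ i, (a • x + b • y) i = a * ∑ i, x i + b * ∑ i, y i := by
          simp [Finset.mul_sum, Finset.sum_add_distrib]
        rw [this]
        nlinarith [mul_le_mul_of_nonneg_left hx ha, mul_le_mul_of_nonneg_left hy hb]
    have hssum : (0:ℝ) ≤ ∑ i, s i := by
      rw [hσ] at hs
      exact Finset.sum_nonneg fun i _ => hs i
    have : ∑ i, (c + s) i = (0:ℝ) := by rw [hcs]; simp
    simp only [Pi.add_apply, Finset.sum_add_distrib] at this
    simp only [Set.mem_setOf_eq] at hsum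
    linarith
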